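/- The determinant of the d×d Hilbert matrix, with entries 1/(i+j+1) for 0 ≤ i,j ≤ d-1, is strictly positive. -/

import Mathlib

/-!
The Hilbert matrix is the Gram matrix of the monomials `1, t, …, t ^ (d - 1)` in `L²[0, 1]`:
for a coefficient vector `x` with polynomial `p`, `xᵀ H x = ∫₀¹ p(t)² dt`, which is positive
unless `p = 0`, since a nonzero polynomial has only finitely many roots. Hence `H` is positive
definite and its determinant is positive.
-/

open Matrix Polynomial MeasureTheory

theorem Polynomial.eval_ofFn {R : Type*} [CommSemiring R] [DecidableEq R] (n : ℕ)
    (v : Fin n → R) (t : R) : (ofFn n v).eval t = ∑ i, v i * t ^ (i : ℕ) := by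
  simp [ofFn_eq_sum_monomial, eval_finsetSum]

theorem Polynomial.intervalIntegral_eval_sq_pos {p : ℝ[X]} (hp : p ≠ 0) {a b : ℝ}
    (hab : a < b) : 0 < ∫ t in a..b, p.eval t ^ 2 := by
  have hsupp : Set.Ioc a b \ {t | p.IsRoot t} ⊆
      Function.support (fun t ↦ p.eval t ^ 2) ∩ Set.Ioc a b :=
    fun t ⟨ht, hroot⟩ ↦ ⟨pow_ne_zero _ hroot, ht⟩
  rw [intervalIntegral.integral_pos_iff_support_of_nonneg_ae
    (Filter.Eventually.of_forall fun t ↦ sq_nonneg _)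
    ((p.continuous.pow 2).intervalIntegrable _ _)]
  refine ⟨hab, lt_of_lt_of_le ?_ (measure_mono hsupp)⟩
  rw [measure_sdiff_null ((finite_setOfPred_isRoot hp).measure_zero _), Real.volume_Ioc]
  simpa using hab

noncomputable def hilbertMatrix (d : ℕ) : Matrix (Fin d) (Fin d) ℝ :=
  of fun i j ↦ 1 / ((i : ℝ) + j + 1)

theorem dotProduct_hilbertMatrix_mulVec {d : ℕ} (x : Fin d → ℝ) :
    x ⬝ᵥ (hilbertMatrix d *ᵥ x) = ∫ t in (0 : ℝ)..1, (ofFn d x).eval t ^ 2 := by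
  have hsq (t : ℝ) :
      (ofFn d x).eval t ^ 2 = ∑ i : Fin d, ∑ j : Fin d, x i * x j * t ^ ((i : ℕ) + j) := by
    rw [eval_ofFn, sq, Finset.sum_mul_sum]
    simp only [pow_add]
    exact Finset.sum_congr rfl fun i _ ↦ Finset.sum_congr rfl fun j _ ↦ by ring
  simp only [hsq]
  rw [intervalIntegral.integral_finsetSum fun i _ ↦ ?_]
  · simp only [dotProduct, mulVec, hilbertMatrix, of_apply, Finset.mul_sum]
    refine Finset.sum_congr rfl fun i _ ↦ ?_
    rw [intervalIntegral.integral_finsetSum fun j _ ↦ ?_]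
    · refine Finset.sum_congr rfl fun j _ ↦ ?_
      rw [intervalIntegral.integral_const_mul, integral_pow]
      push_cast
      ring
    · exact (continuous_const.mul (continuous_pow _)).intervalIntegrable _ _
  · exact (continuous_finsetSum _ fun j _ ↦
      continuous_const.mul (continuous_pow _)).intervalIntegrable _ _

theorem posDef_hilbertMatrix (d : ℕ) : (hilbertMatrix d).PosDef := by
  refine posDef_iff_dotProduct_mulVec.mpr ⟨?_, fun x hx ↦ ?_⟩
  · ext i j
    simp [hilbertMatrix, add_comm]
  · rw [star_trivial, dotProduct_hilbertMatrix_mulVec]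
    exact intervalIntegral_eval_sq_pos ((map_ne_zero_iff _ (injective_ofFn d)).mpr hx) one_pos

theorem hilbert_matrix_det_pos_general (d : ℕ)
    (H : Matrix (Fin d) (Fin d) ℝ)
    (hH : ∀ i j : Fin d, H i j = 1 / (i.val + j.val + 1)) :
    0 < H.det := by
  obtain rfl : H = hilbertMatrix d := Matrix.ext hH
  exact (posDef_hilbertMatrix d).det_pos

theorem hilbert_matrix_det_pos (d : ℕ) (hd : 1 ≤ d)
    (H : Matrix (Fin d) (Fin d) ℝ)
    (hH : ∀ i j : Fin d, H i j = 1 / (i.val + j.val + 1)) :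
    0 < H.det :=
  hilbert_matrix_det_pos_general d H hH
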